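/- (Combinatorial interpolation, full version.) For all positive integers e, n, N there exists a positive integer d with the following property: for every finite set X and every coloring t of the nonempty subsets of X of size at most n−1 by N colors, there exists a subset T ⊆ X with |T| ≤ d such that for every color a and every 1 ≤ s ≤ n−1: #{S ⊆ X : |S| = s and t(S) = a} ≡ #{S ⊆ T : |S| = s and t(S) = a} (mod e). -/

import Mathlib

/-!
Record the counts mod `e` of the subsets of `X` of each color and each size `< n` as the
*profile* of `X`. It suffices to find, in every large enough `X`, a nonempty `H ⊆ X` with
`profile (X \ H) = profile X`, and to iterate. Hypergraph Ramsey applied to the coloring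
`D ↦ profile (X \ D)` gives `H ⊆ X` of size `P = e * n!` on which this coloring depends only on
`#D`, say through `c : ℕ → profile`. By inclusion–exclusion the `i`-th forward difference of `c`
at `0` vanishes for `i ≥ n`, since the counted sets have fewer than `n` elements. Newton's
formula `c P = ∑ i, P.choose i • Δ^i c 0` and `e ∣ P.choose i` for `0 < i < n` then give
`c P = c 0`.
-/

open Finset
open scoped fwdDiff

universe u

section Ramsey

variable {κ : Type*}

def IsHomogeneous {α : Type*} (f : Finset α → κ) (k : ℕ) (H : Finset α) : Prop :=
  ∀ D₁ ⊆ H, ∀ D₂ ⊆ H, #D₁ = k → #D₂ = k → f D₁ = f D₂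

theorem IsHomogeneous.mono {α : Type*} {f : Finset α → κ} {k : ℕ} {H H' : Finset α}
    (h : IsHomogeneous f k H) (hH' : H' ⊆ H) : IsHomogeneous f k H' :=
  fun D₁ h₁ D₂ h₂ => h D₁ (h₁.trans hH') D₂ (h₂.trans hH')

theorem isHomogeneous_zero {α : Type*} (f : Finset α → κ) (H : Finset α) :
    IsHomogeneous f 0 H := by
  intro D₁ _ D₂ _ h₁ h₂
  rw [card_eq_zero.mp h₁, card_eq_zero.mp h₂]

variable (κ) in
def IsRamseyBound (k m R : ℕ) : Prop :=
  ∀ {α : Type u} [LinearOrder α] (X : Finset α) (f : Finset α → κ), R ≤ #X →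
    ∃ H ⊆ X, m ≤ #H ∧ IsHomogeneous f k H

theorem exists_endHomogeneous {k : ℕ} (hk : ∀ m, ∃ R, IsRamseyBound.{u} κ k m R) (q : ℕ) :
    ∃ R, ∀ {α : Type u} [LinearOrder α] (X : Finset α) (f : Finset α → κ), R ≤ #X →
      ∃ A ⊆ X, ∃ Y ⊆ X, #A = q ∧ k ≤ #Y ∧ (∀ a ∈ A, ∀ y ∈ Y, a < y) ∧
        ∀ a ∈ A, IsHomogeneous (fun D => f (insert a D)) k {x ∈ A ∪ Y | a < x} := by
  induction q with
  | zero => exact ⟨k, fun X f hX => ⟨∅, empty_subset _, X, subset_rfl, rfl, hX, by simp, by simp⟩⟩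
  | succ q ih =>
    obtain ⟨Rq, hRq⟩ := ih
    obtain ⟨R, hR⟩ := hk Rq
    refine ⟨R + 1, fun X f hX => ?_⟩
    have hne : X.Nonempty := card_pos.mp (by omega)
    set a := X.min' hne
    have ha : a ∈ X := X.min'_mem hne
    have hlt : ∀ x ∈ X.erase a, a < x := fun x hx =>
      lt_of_le_of_ne (X.min'_le x (mem_of_mem_erase hx)) (ne_of_mem_erase hx).symm
    obtain ⟨Y₁, hY₁, hY₁card, hY₁hom⟩ :=
      hR (X.erase a) (fun D => f (insert a D)) (by rw [card_erase_of_mem ha]; omega)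
    obtain ⟨A, hA, Y, hY, hAcard, hYcard, hAY, hAhom⟩ := hRq Y₁ f hY₁card
    have haA : a ∉ A := fun h => (hlt a (hY₁ (hA h))).false
    refine ⟨insert a A, insert_subset ha ((hA.trans hY₁).trans (erase_subset a X)), Y,
      (hY.trans hY₁).trans (erase_subset a X), by rw [card_insert_of_notMem haA, hAcard],
      hYcard, ?_, ?_⟩
    · intro b hb y hy
      rcases mem_insert.mp hb with rfl | hb
      exacts [hlt y (hY₁ (hY hy)), hAY b hb y hy]
    · intro b hb
      rcases mem_insert.mp hb with rfl | hb
      · refine hY₁hom.mono fun x hx => ?_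
        simp only [mem_filter, mem_union, mem_insert] at hx
        rcases hx with ⟨(rfl | hx) | hx, hbx⟩
        exacts [absurd hbx (lt_irrefl _), hA hx, hY hx]
      · refine (hAhom b hb).mono fun x hx => ?_
        have hab : a < b := hlt b (hY₁ (hA hb))
        simp only [mem_filter, mem_union, mem_insert] at hx ⊢
        rcases hx with ⟨(rfl | hx) | hx, hbx⟩
        exacts [absurd (hab.trans hbx) (lt_irrefl _), ⟨Or.inl hx, hbx⟩, ⟨Or.inr hx, hbx⟩]

theorem exists_isRamseyBound_succ [Fintype κ] {k : ℕ} (hk : ∀ m, ∃ R, IsRamseyBound.{u} κ k m R)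
    (m : ℕ) : ∃ R, IsRamseyBound.{u} κ (k + 1) m R := by
  classical
  obtain ⟨R, hR⟩ := exists_endHomogeneous hk (Fintype.card κ * m)
  refine ⟨R, fun X f hX => ?_⟩
  obtain ⟨A, hA, Y, -, hAcard, hYcard, hAY, hAhom⟩ := hR X f hX
  obtain ⟨D₀, hD₀, hD₀card⟩ := exists_subset_card_eq hYcard
  have : Nonempty κ := ⟨f ∅⟩
  obtain ⟨c, -, hc⟩ := exists_le_card_fiber_of_mul_le_card_of_maps_to
    (f := fun a => f (insert a D₀)) (fun _ _ => mem_univ _) univ_nonempty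
    (by rw [card_univ, hAcard])
  refine ⟨_, (filter_subset _ A).trans hA, hc, ?_⟩
  -- A `(k+1)`-subset `D` of the fiber has the color of `insert (min D) D₀`, which is `c`.
  suffices hD : ∀ D ⊆ {a ∈ A | f (insert a D₀) = c}, #D = k + 1 → f D = c from
    fun D₁ h₁ D₂ h₂ hc₁ hc₂ => (hD D₁ h₁ hc₁).trans (hD D₂ h₂ hc₂).symm
  intro D hD hDcard
  have hne : D.Nonempty := card_pos.mp (by omega)
  set b := D.min' hne
  have hb : b ∈ D := D.min'_mem hne
  obtain ⟨hbA, hbc⟩ := mem_filter.mp (hD hb)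
  rw [← insert_erase hb, ← hbc]
  refine hAhom b hbA _ (fun x hx => ?_) _ (fun x hx => ?_)
    (by rw [card_erase_of_mem hb, hDcard]; rfl) hD₀card
  · exact mem_filter.mpr ⟨mem_union_left _ (mem_filter.mp (hD (mem_of_mem_erase hx))).1,
      lt_of_le_of_ne (D.min'_le x (mem_of_mem_erase hx)) (ne_of_mem_erase hx).symm⟩
  · exact mem_filter.mpr ⟨mem_union_right _ (hD₀ hx), hAY b hbA x (hD₀ hx)⟩

theorem exists_isRamseyBound [Fintype κ] (k m : ℕ) : ∃ R, IsRamseyBound.{u} κ k m R := by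
  induction k generalizing m with
  | zero => exact ⟨m, fun X f hX => ⟨X, subset_rfl, hX, isHomogeneous_zero f X⟩⟩
  | succ k ih => exact exists_isRamseyBound_succ ih m

theorem exists_isHomogeneous_of_le [Fintype κ] (K m : ℕ) :
    ∃ R, ∀ {α : Type u} [LinearOrder α] (X : Finset α) (f : Finset α → κ), R ≤ #X →
      ∃ H ⊆ X, m ≤ #H ∧ ∀ j ≤ K, IsHomogeneous f j H := by
  induction K generalizing m with
  | zero =>
    exact ⟨m, fun X f hX => ⟨X, subset_rfl, hX, fun j hj => by
      rw [Nat.le_zero.mp hj]; exact isHomogeneous_zero f X⟩⟩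
  | succ K ih =>
    obtain ⟨R₁, hR₁⟩ := ih m
    obtain ⟨R, hR⟩ := exists_isRamseyBound.{u} (κ := κ) (K + 1) R₁
    refine ⟨R, fun X f hX => ?_⟩
    obtain ⟨H₁, hH₁, hH₁card, hH₁hom⟩ := hR X f hX
    obtain ⟨H, hH, hHcard, hHhom⟩ := hR₁ H₁ f hH₁card
    refine ⟨H, hH.trans hH₁, hHcard, fun j hj => ?_⟩
    rcases Nat.of_le_succ hj with hj | rfl
    exacts [hHhom j hj, hH₁hom.mono hH]

end Ramsey

theorem sum_powerset_neg_one_pow_card_mul_card_filter_sdiff {α : Type*} [DecidableEq α]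
    (X D : Finset α) (p : Finset α → Prop) [DecidablePred p] (hp : ∀ S, p S → #S < #D) :
    ∑ E ∈ D.powerset, (-1 : ℤ) ^ #E * #{S ∈ (X \ E).powerset | p S} = 0 := by
  have hcard : ∀ E, (#{S ∈ (X \ E).powerset | p S} : ℤ) =
      ∑ S ∈ X.powerset with p S, if Disjoint S E then 1 else 0 := by
    intro E
    rw [sum_boole, filter_filter]
    congr 2
    ext S
    simp only [mem_filter, mem_powerset, subset_sdiff]
    tauto
  simp_rw [hcard, mul_sum, mul_boole]
  rw [sum_comm]
  refine sum_eq_zero fun S hS => ?_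
  rw [← sum_filter]
  have hfilter : {E ∈ D.powerset | Disjoint S E} = (D \ S).powerset := by
    ext E
    simp only [mem_filter, mem_powerset, subset_sdiff, disjoint_comm]
  rw [hfilter, sum_powerset_neg_one_pow_card_of_nonempty]
  have := le_card_sdiff S D
  have := hp S (mem_filter.mp hS).2
  exact card_pos.mp (by omega)

theorem dvd_choose_of_mul_dvd {e m k : ℕ} (hk : 0 < k) (h : e * k ∣ m) : e ∣ m.choose k := by
  obtain ⟨k, rfl⟩ := Nat.exists_eq_add_one_of_ne_zero hk.ne'
  rcases Nat.eq_zero_or_pos m with rfl | hm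
  · simp
  obtain ⟨m, rfl⟩ := Nat.exists_eq_add_one_of_ne_zero hm.ne'
  refine Nat.dvd_of_mul_dvd_mul_right hk ?_
  rw [← Nat.add_one_mul_choose_eq]
  exact h.trans (dvd_mul_right _ _)

theorem fwdDiff_iter_card_eq_sum_powerset {α G : Type*} [AddCommGroup G] (c : ℕ → G)
    (D : Finset α) :
    (Δ_[1])^[#D] c 0 = (-1 : ℤ) ^ #D • ∑ E ∈ D.powerset, (-1 : ℤ) ^ #E • c #E := by
  rw [fwdDiff_iter_eq_sum_shift, sum_powerset_apply_card (fun k => (-1 : ℤ) ^ k • c k), smul_sum]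
  refine sum_congr rfl fun k hk => ?_
  have hsign : (-1 : ℤ) ^ (#D - k) = (-1) ^ #D * (-1) ^ k := by
    rw [← pow_add, show #D + k = #D - k + 2 * k by grind, pow_add, pow_mul]
    simp
  rw [zero_add, smul_eq_mul, mul_one, hsign, ← natCast_zsmul, smul_smul, smul_smul]
  congr 1
  ring

theorem eq_of_fwdDiff_iter_eq_zero {G : Type*} [AddCommGroup G] {e n : ℕ}
    (hG : ∀ x : G, e • x = 0) (c : ℕ → G)
    (hc : ∀ i, n ≤ i → i ≤ e * n.factorial → (Δ_[1])^[i] c 0 = 0) : c (e * n.factorial) = c 0 := by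
  have newton := shift_eq_sum_fwdDiff_iter 1 c (e * n.factorial) 0
  rw [zero_add, smul_eq_mul, mul_one] at newton
  rw [newton, sum_eq_single 0 (fun k hk hk0 => ?_) (by simp)]
  · simp
  rcases lt_or_ge k n with hkn | hkn
  · obtain ⟨w, hw⟩ := dvd_choose_of_mul_dvd (Nat.pos_of_ne_zero hk0)
      (mul_dvd_mul_left e (Nat.dvd_factorial (Nat.pos_of_ne_zero hk0) hkn.le))
    rw [hw, mul_smul, hG]
  · rw [hc k hkn (Nat.lt_succ_iff.mp (mem_range.mp hk)), smul_zero]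

theorem apply_eq_apply_empty_of_sum_powerset_eq_zero {α G : Type*} [AddCommGroup G] {e n : ℕ}
    (hG : ∀ x : G, e • x = 0) (g : Finset α → G) (H : Finset α) (hH : #H = e * n.factorial)
    (hhom : ∀ j, IsHomogeneous g j H)
    (hvan : ∀ D ⊆ H, n ≤ #D → ∑ E ∈ D.powerset, (-1 : ℤ) ^ #E • g E = 0) :
    g H = g ∅ := by
  choose D hDH hDcard using fun j => exists_subset_card_eq (min_le_right j #H)
  have hgc : ∀ E ⊆ H, g E = g (D #E) := fun E hE =>
    hhom _ E hE _ (hDH _) rfl (by rw [hDcard, min_eq_left (card_le_card hE)])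
  have hc := eq_of_fwdDiff_iter_eq_zero hG (fun j => g (D j)) fun i hni hiP => by
    have hDi : #(D i) = i := by rw [hDcard, min_eq_left (hH ▸ hiP)]
    have hsum := fwdDiff_iter_card_eq_sum_powerset (fun j => g (D j)) (D i)
    rw [hDi] at hsum
    rw [hsum, sum_congr rfl fun E hE => by rw [← hgc E ((mem_powerset.mp hE).trans (hDH i))],
      hvan (D i) (hDH i) (hni.trans hDi.ge), smul_zero]
  rwa [← hH, ← hgc H subset_rfl, ← card_empty, ← hgc ∅ (empty_subset H)] at hc

def profile {α κ : Type*} [DecidableEq κ] (e n : ℕ) (t : Finset α → κ) (X : Finset α) :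
    κ × Fin n → ZMod e :=
  fun p => #{S ∈ X.powerset | #S = p.2 ∧ t S = p.1}

theorem sum_powerset_neg_one_pow_smul_profile_sdiff {α κ : Type*} [DecidableEq α]
    [DecidableEq κ] {e n : ℕ} (t : Finset α → κ) (X D : Finset α) (hD : n ≤ #D) :
    ∑ E ∈ D.powerset, (-1 : ℤ) ^ #E • profile e n t (X \ E) = 0 := by
  ext p
  have := congrArg (Int.cast : ℤ → ZMod e) <|
    sum_powerset_neg_one_pow_card_mul_card_filter_sdiff X D (fun S => #S = p.2 ∧ t S = p.1)
      fun S hS => hS.1 ▸ p.2.2.trans_le hD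
  push_cast at this
  simpa [profile, Finset.sum_apply, zsmul_eq_mul] using this

theorem exists_ssubset_profile_eq {κ : Type*} [DecidableEq κ] [Fintype κ] {e : ℕ} (he : 0 < e)
    (n : ℕ) : ∃ R, ∀ {α : Type u} [DecidableEq α] (X : Finset α) (t : Finset α → κ), R ≤ #X →
      ∃ X' ⊂ X, profile e n t X' = profile e n t X := by
  have : NeZero e := ⟨he.ne'⟩
  obtain ⟨R, hR⟩ :=
    exists_isHomogeneous_of_le.{u} (κ := κ × Fin n → ZMod e) (e * n.factorial) (e * n.factorial)
  refine ⟨R, fun {α} _ X t hX => ?_⟩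
  have : LinearOrder α := by classical exact linearOrderOfSTO WellOrderingRel
  obtain ⟨H₁, hH₁X, hH₁card, hH₁hom⟩ := hR X (fun D => profile e n t (X \ D)) hX
  obtain ⟨H, hHH₁, hHcard⟩ := exists_subset_card_eq hH₁card
  have hhom : ∀ j, IsHomogeneous (fun D => profile e n t (X \ D)) j H :=
    fun j D₁ h₁ D₂ h₂ hc₁ => (hH₁hom j (hc₁ ▸ hHcard ▸ card_le_card h₁)).mono hHH₁ D₁ h₁ D₂ h₂ hc₁
  have hG : ∀ x : κ × Fin n → ZMod e, e • x = 0 := fun x => funext fun p => by simp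
  have key := apply_eq_apply_empty_of_sum_powerset_eq_zero hG _ H hHcard hhom
    fun D _ hD => sum_powerset_neg_one_pow_smul_profile_sdiff t X D hD
  refine ⟨X \ H, sdiff_ssubset (hHH₁.trans hH₁X) (card_pos.mp ?_), by simpa using key⟩
  rw [hHcard]
  positivity

theorem exists_card_le_profile_eq {κ : Type*} [DecidableEq κ] [Fintype κ] {e : ℕ} (he : 0 < e)
    (n : ℕ) : ∃ d, 0 < d ∧ ∀ {α : Type u} [DecidableEq α] (X : Finset α) (t : Finset α → κ),
      ∃ T ⊆ X, #T ≤ d ∧ profile e n t T = profile e n t X := by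
  obtain ⟨R, hR⟩ := exists_ssubset_profile_eq (κ := κ) he n
  refine ⟨max R 1, by omega, fun X t => ?_⟩
  induction X using strongInduction with
  | H X ih =>
    by_cases hX : #X ≤ max R 1
    · exact ⟨X, subset_rfl, hX, rfl⟩
    obtain ⟨X', hX', hprof⟩ := hR X t (by omega)
    obtain ⟨T, hT, hTcard, hTprof⟩ := ih X' hX'
    exact ⟨T, hT.trans hX'.subset, hTcard, hTprof.trans hprof⟩

theorem interpolation_full_general (e n N : ℕ) (he : 0 < e) :
    ∃ d : ℕ, 0 < d ∧
      ∀ (α : Type) [DecidableEq α] (X : Finset α),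
        ∀ t : Finset α → Fin N,
          ∃ T : Finset α, T ⊆ X ∧ T.card ≤ d ∧
            ∀ (a : Fin N) (s : ℕ), 1 ≤ s → s ≤ n - 1 →
              (X.powerset.filter fun S => S.card = s ∧ t S = a).card ≡
                (T.powerset.filter fun S => S.card = s ∧ t S = a).card [MOD e] := by
  obtain ⟨d, hd, hT⟩ := exists_card_le_profile_eq.{0} (κ := Fin N) he n
  refine ⟨d, hd, fun α _ X t => ?_⟩
  obtain ⟨T, hTX, hTcard, hprof⟩ := hT X t
  refine ⟨T, hTX, hTcard, fun a s _ hs => ?_⟩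
  have := congrFun hprof (a, ⟨s, by omega⟩)
  exact ((ZMod.natCast_eq_natCast_iff _ _ _).mp this).symm

/-- Combinatorial interpolation, full version: for all positive `e`, `n`, `N`
there is a positive `d` such that for every finite set `X` and every coloring
`t` of the (nonempty, of size `≤ n-1`) subsets of `X` by `N` colors, there is
`T ⊆ X` with `|T| ≤ d` such that for every color `a` and every `1 ≤ s ≤ n-1`
the number of size-`s` subsets of `X` with color `a` is congruent mod `e` to
the number of size-`s` subsets of `T` with color `a`. -/
theorem interpolation_full (e n N : ℕ) (he : 0 < e) (hn : 0 < n) (hN : 0 < N) :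
    ∃ d : ℕ, 0 < d ∧
      ∀ (α : Type) [DecidableEq α] (X : Finset α),
        ∀ t : Finset α → Fin N,
          ∃ T : Finset α, T ⊆ X ∧ T.card ≤ d ∧
            ∀ (a : Fin N) (s : ℕ), 1 ≤ s → s ≤ n - 1 →
              (X.powerset.filter fun S => S.card = s ∧ t S = a).card ≡
                (T.powerset.filter fun S => S.card = s ∧ t S = a).card [MOD e] :=
  interpolation_full_general e n N he
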